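/- The game G_FL is ultrahomogeneous with respect to (emb, FinGame): for every finite game H and all game embeddings f, g : H → G_FL there is an automorphism u of G_FL such that u ∘ f = g. -/
import Mathlib


universe u v w x y

namespace FraisseGames

/-- The initial segment (of length `n`) of an infinite sequence `R`. -/
def runPrefix {M : Type u} (R : ℕ → M) (n : ℕ) : List M :=
  (List.range n).map R

/-- `T` is a game tree over `M`: it is closed under initial segments, and every
moment of `T` has a one-step extension in `T`. -/
def IsGameTree {M : Type u} (T : Set (List M)) : Prop :=
  (∀ t ∈ T, ∀ k : ℕ, t.take k ∈ T) ∧ ∀ t ∈ T, ∃ x : M, t ++ [x] ∈ T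

/-- The set of runs of the tree `T`. -/
def Runs {M : Type u} (T : Set (List M)) : Set (ℕ → M) :=
  {R | ∀ n : ℕ, runPrefix R n ∈ T}

/-- A game over `M`: a game tree together with a payoff set of runs. -/
structure Game (M : Type u) : Type u where
  tree : Set (List M)
  isGameTree : IsGameTree tree
  payoff : Set (ℕ → M)
  payoff_subset : payoff ⊆ Runs tree

/-- A game is finite if its set of runs is finite. -/
def Game.IsFin {M : Type u} (G : Game M) : Prop := (Runs G.tree).Finite

/-- The subgame relation `G ≤ G'`. -/
def Game.Sub {M : Type u} (G G' : Game M) : Prop :=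
  G.tree ⊆ G'.tree ∧ G.payoff = G'.payoff ∩ Runs G.tree

/-- `f` is a chronological map from `T₁` to `T₂`: it maps `T₁` into `T₂` and it
preserves lengths and truncations of moments. -/
def Chronological {M₁ : Type u} {M₂ : Type v} (T₁ : Set (List M₁)) (T₂ : Set (List M₂))
    (f : List M₁ → List M₂) : Prop :=
  (∀ t ∈ T₁, f t ∈ T₂) ∧ (∀ t ∈ T₁, (f t).length = t.length) ∧
    ∀ t ∈ T₁, ∀ k : ℕ, f (t.take k) = (f t).take k

/-- `BarMapsTo f R S` says that the map `f̄` on runs induced by the chronological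
map `f` sends the run `R` to the run `S`, i.e. `S↾n = f (R↾n)` for all `n`. -/
def BarMapsTo {M₁ : Type u} {M₂ : Type v} (f : List M₁ → List M₂)
    (R : ℕ → M₁) (S : ℕ → M₂) : Prop :=
  ∀ n : ℕ, runPrefix S n = f (runPrefix R n)

/-- `f` is an A-morphism from `G₁` to `G₂`: a chronological map whose induced map on
runs sends runs won by Ali to runs won by Ali. -/
def IsAMorphism {M₁ : Type u} {M₂ : Type v} (G₁ : Game M₁) (G₂ : Game M₂)
    (f : List M₁ → List M₂) : Prop :=
  Chronological G₁.tree G₂.tree f ∧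
    ∀ R ∈ G₁.payoff, ∀ S : ℕ → M₂, BarMapsTo f R S → S ∈ G₂.payoff

/-- `f` is a game embedding from `G₁` to `G₂`: a chronological map, injective on the
tree, such that for every run `R` of `G₁`, `R ∈ A₁ ↔ f̄ R ∈ A₂`. -/
def IsGameEmbedding {M₁ : Type u} {M₂ : Type v} (G₁ : Game M₁) (G₂ : Game M₂)
    (f : List M₁ → List M₂) : Prop :=
  Chronological G₁.tree G₂.tree f ∧
    (∀ t ∈ G₁.tree, ∀ s ∈ G₁.tree, f t = f s → t = s) ∧
    ∀ R ∈ Runs G₁.tree, ∀ S : ℕ → M₂, BarMapsTo f R S → (R ∈ G₁.payoff ↔ S ∈ G₂.payoff)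

/-- `f` is an isomorphism of games from `G₁` onto `G₂`: a game embedding that is
surjective onto the tree of `G₂`. -/
def IsGameIso {M₁ : Type u} {M₂ : Type v} (G₁ : Game M₁) (G₂ : Game M₂)
    (f : List M₁ → List M₂) : Prop :=
  IsGameEmbedding G₁ G₂ f ∧ ∀ s ∈ G₂.tree, ∃ t ∈ G₁.tree, f t = s

/-- The set of eventually-zero infinite sequences of natural numbers. -/
def c00 : Set (ℕ → ℕ) := {R | ∃ N : ℕ, ∀ n ≥ N, R n = 0}

/-- The game `G_FL = (ω^{<ω}, c₀₀)`. -/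
def GFL : Game ℕ where
  tree := Set.univ
  isGameTree := ⟨fun _ _ _ => trivial, fun _ _ => ⟨0, trivial⟩⟩
  payoff := c00
  payoff_subset := fun _ _ _ => trivial



theorem list_eq_take_concat {α : Type*} (l : List α) (n : ℕ) (d : α) (h : l.length = n + 1) :
    l = l.take n ++ [l.getD n d] := by
  have hn : n < l.length := by omega
  conv_lhs => rw [← List.take_append_drop n l]
  congr 1
  rw [List.getD_eq_getElem l d hn, List.drop_eq_getElem_cons hn]
  have : l.drop (n+1) = [] := by
    apply List.eq_nil_of_length_eq_zero
    simp [h]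
  rw [this]

theorem take_getD {α : Type*} (l : List α) (d : α) {i m : ℕ} (h : i < m) :
    (l.take m).getD i d = l.getD i d := by
  by_cases hl : i < l.length
  · have h1 : i < (l.take m).length := by simp; omega
    rw [List.getD_eq_getElem _ d h1, List.getD_eq_getElem _ d hl, List.getElem_take]
  · have h1 : ¬ i < (l.take m).length := by simp; omega
    rw [List.getD_eq_default _ d (by omega), List.getD_eq_default _ d (by omega)]

theorem runPrefix_length {M : Type*} (R : ℕ → M) (n : ℕ) :
    (runPrefix R n).length = n := by simp [runPrefix]

theorem runPrefix_succ {M : Type*} (R : ℕ → M) (n : ℕ) :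
    runPrefix R (n + 1) = runPrefix R n ++ [R n] := by
  simp [runPrefix, List.range_succ]

theorem runPrefix_take {M : Type*} (R : ℕ → M) (n k : ℕ) :
    (runPrefix R n).take k = runPrefix R (min k n) := by
  simp [runPrefix, ← List.map_take, List.take_range]

theorem exists_run_through {M : Type*} {T : Set (List M)} (hT : IsGameTree T)
    {t : List M} (ht : t ∈ T) : ∃ R ∈ Runs T, runPrefix R t.length = t := by
  classical
  obtain ⟨hcl, hext⟩ := hT
  obtain ⟨x0, -⟩ := hext t ht
  set F : List M → List M := fun l => if h : l ∈ T then l ++ [Classical.choose (hext l h)] else l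
    with hF
  set E : ℕ → List M := fun n => F^[n] t with hE
  have hmem : ∀ n, E n ∈ T := by
    intro n
    induction n with
    | zero => exact ht
    | succ n ih =>
      have : E (n+1) = F (E n) := Function.iterate_succ_apply' F n t
      rw [this, hF]
      simp only [ih, dite_true]
      exact Classical.choose_spec (hext (E n) ih)
  have hsucc : ∀ n, E (n+1) = E n ++ [Classical.choose (hext (E n) (hmem n))] := by
    intro n
    have : E (n+1) = F (E n) := Function.iterate_succ_apply' F n t
    rw [this, hF]
    simp [hmem n]
  have hlen : ∀ n, (E n).length = t.length + n := by
    intro n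
    induction n with
    | zero => rfl
    | succ n ih => rw [hsucc n]; simp [ih]; omega
  have hpre : ∀ n m, n ≤ m → E n <+: E m := by
    intro n m h
    induction m with
    | zero => have : n = 0 := by omega
              subst this; exact List.prefix_refl _
    | succ m ih =>
      rcases Nat.lt_or_ge n (m+1) with h' | h'
      · exact (ih (by omega)).trans (by rw [hsucc m]; exact List.prefix_append _ _)
      · have : n = m + 1 := by omega
        subst this; exact List.prefix_refl _
  have key : ∀ n, runPrefix (fun n => (E (n+1)).getD n x0) n = (E n).take n := by
    intro n
    apply List.ext_getElem
    · rw [runPrefix_length]; simp [hlen n]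
    · intro i h1 h2
      have hi : i < n := by rwa [runPrefix_length] at h1
      rw [List.getElem_take]
      simp only [runPrefix, List.getElem_map, List.getElem_range]
      have hpr := hpre (i+1) n hi
      rw [List.prefix_iff_eq_take] at hpr
      rw [hpr, take_getD _ _ (by rw [hlen (i+1)]; omega)]
      rw [List.getD_eq_getElem _ x0 (by rw [hlen n]; omega)]
  refine ⟨fun n => (E (n+1)).getD n x0, ?_, ?_⟩
  · intro n
    rw [key n]
    exact hcl _ (hmem n) n
  · rw [key t.length]
    have := (List.prefix_iff_eq_take).1 (hpre 0 t.length (by omega))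
    simpa [hE] using this.symm

theorem children_finite {M : Type*} {T : Set (List M)} (hT : IsGameTree T)
    (hfin : (Runs T).Finite) (t : List M) :
    {x : M | t ++ [x] ∈ T}.Finite := by
  classical
  have hrun : ∀ x ∈ {x : M | t ++ [x] ∈ T}, ∃ R ∈ Runs T, runPrefix R (t.length + 1) = t ++ [x] := by
    intro x hx
    obtain ⟨R, hR, hRp⟩ := exists_run_through hT hx
    exact ⟨R, hR, by simpa using hRp⟩
  choose! Rn hRn hRp using hrun
  apply Set.Finite.of_finite_image (f := Rn)
  · exact hfin.subset (by intro y hy; obtain ⟨x, hx, rfl⟩ := hy; exact hRn x hx)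
  · intro x hx y hy hxy
    have h2 : t ++ [x] = t ++ [y] := (hRp x hx).symm.trans (by rw [hxy]; exact hRp y hy)
    simpa using List.append_cancel_left h2

theorem exists_perm_extend {C : Set ℕ} (hC : C.Finite) {u : ℕ → ℕ} (hu : Set.InjOn u C) :
    ∃ π : Equiv.Perm ℕ, ∀ x ∈ C, π x = u x := by
  classical
  have hCc : Cᶜ.Infinite := hC.infinite_compl
  have hDc : (u '' C)ᶜ.Infinite := (hC.image u).infinite_compl
  let e1 : ↥C ≃ ↥(u '' C) := Equiv.Set.imageOfInjOn u C hu
  have h1 : Nonempty (Denumerable ↥(Cᶜ)) := by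
    rw [nonempty_denumerable_iff]
    exact ⟨Set.to_countable _, hCc.to_subtype⟩
  have h2 : Nonempty (Denumerable ↥((u '' C)ᶜ)) := by
    rw [nonempty_denumerable_iff]
    exact ⟨Set.to_countable _, hDc.to_subtype⟩
  obtain ⟨d1⟩ := h1
  obtain ⟨d2⟩ := h2
  have e2 : ↥(Cᶜ) ≃ ↥((u '' C)ᶜ) := (@Denumerable.eqv _ d1).trans (@Denumerable.eqv _ d2).symm
  refine ⟨((Equiv.Set.sumCompl C).symm.trans ((e1.sumCongr e2).trans
    (Equiv.Set.sumCompl (u '' C)))), ?_⟩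
  intro x hx
  simp only [Equiv.trans_apply]
  rw [Equiv.Set.sumCompl_symm_apply_of_mem hx]
  rw [Equiv.sumCongr_apply, Sum.map_inl, Equiv.Set.sumCompl_apply_inl]
  simp [e1, Equiv.Set.imageOfInjOn]

def permMap (π : List ℕ → Equiv.Perm ℕ) (s : List ℕ) : List ℕ :=
  (List.range s.length).map fun i => π (s.take i) (s.getD i 0)

theorem permMap_length (π : List ℕ → Equiv.Perm ℕ) (s : List ℕ) :
    (permMap π s).length = s.length := by simp [permMap]

theorem permMap_take (π : List ℕ → Equiv.Perm ℕ) (s : List ℕ) (k : ℕ) :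
    permMap π (s.take k) = (permMap π s).take k := by
  simp only [permMap, List.length_take, ← List.map_take, List.take_range]
  apply List.map_congr_left
  intro i hi
  rw [List.mem_range] at hi
  rw [List.take_take, Nat.min_def]
  have hik : i < k := lt_of_lt_of_le hi (min_le_left _ _)
  rw [if_pos (by omega), take_getD _ _ hik]

theorem permMap_concat (π : List ℕ → Equiv.Perm ℕ) (s : List ℕ) (x : ℕ) :
    permMap π (s ++ [x]) = permMap π s ++ [π s x] := by
  simp only [permMap, List.length_append, List.length_singleton, List.range_succ, List.map_append,
    List.map_cons, List.map_nil]
  congr 1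
  · apply List.map_congr_left
    intro i hi
    rw [List.mem_range] at hi
    rw [List.take_append_of_le_length (by omega), List.getD_append _ _ _ _ (by omega)]
  · congr 1
    rw [List.take_left]
    congr 1
    rw [List.getD_eq_getElem _ 0 (by simp), List.getElem_concat_length]
    omega

theorem permMap_injective (π : List ℕ → Equiv.Perm ℕ) :
    Function.Injective (permMap π) := by
  intro a
  induction a using List.reverseRecOn with
  | nil =>
    intro b h
    have : (permMap π b).length = 0 := by rw [← h]; rfl
    rw [permMap_length] at this
    exact (List.eq_nil_of_length_eq_zero this).symm
  | append_singleton a x ih =>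
    intro b h
    rcases List.eq_nil_or_concat b with rfl | ⟨b', y, rfl⟩
    · have : (permMap π (a ++ [x])).length = 0 := by rw [h]; rfl
      rw [permMap_length] at this
      simp at this
    · rw [List.concat_eq_append] at *
      rw [permMap_concat, permMap_concat] at h
      have hlen : (permMap π a).length = (permMap π b').length := by
        have := congrArg List.length h
        simpa using this
      have h1 : permMap π a = permMap π b' ∧ [π a x] = [π b' y] :=
        List.append_inj h (by rw [hlen])
      have hab := ih h1.1
      subst hab
      have : π a x = π a y := by simpa using h1.2
      rw [(π a).injective this]

theorem permMap_surjective (π : List ℕ → Equiv.Perm ℕ) :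
    Function.Surjective (permMap π) := by
  intro s
  induction s using List.reverseRecOn with
  | nil => exact ⟨[], rfl⟩
  | append_singleton s y ih =>
    obtain ⟨l, hl⟩ := ih
    exact ⟨l ++ [(π l).symm y], by rw [permMap_concat, hl, Equiv.apply_symm_apply]⟩

/-- `G_FL` is ultrahomogeneous with respect to game embeddings of
finite games. -/
theorem GFL_ultrahomogeneous :
    ∀ (M : Type u) (H : Game M), H.IsFin →
      ∀ f g : List M → List ℕ,
        IsGameEmbedding H GFL f → IsGameEmbedding H GFL g →
        ∃ φ : List ℕ → List ℕ, IsGameIso GFL GFL φ ∧ ∀ t ∈ H.tree, φ (f t) = g t := by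
  classical
  intro M H hfin f g hf hg
  obtain ⟨⟨hfmem, hflen, hftake⟩, hfinj, hfrun⟩ := hf
  obtain ⟨⟨hgmem, hglen, hgtake⟩, hginj, hgrun⟩ := hg
  have hcl : ∀ t ∈ H.tree, ∀ k : ℕ, t.take k ∈ H.tree := H.isGameTree.1
  -- decomposition of images of one-step extensions
  have hfdec : ∀ t ∈ H.tree, ∀ x : M, t ++ [x] ∈ H.tree →
      f (t ++ [x]) = f t ++ [(f (t ++ [x])).getD t.length 0] := by
    intro t ht x hx
    have hlen1 : (f (t ++ [x])).length = t.length + 1 := by rw [hflen _ hx]; simp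
    have h := list_eq_take_concat (f (t ++ [x])) t.length 0 hlen1
    rw [← hftake _ hx t.length, List.take_left] at h
    exact h
  have hgdec : ∀ t ∈ H.tree, ∀ x : M, t ++ [x] ∈ H.tree →
      g (t ++ [x]) = g t ++ [(g (t ++ [x])).getD t.length 0] := by
    intro t ht x hx
    have hlen1 : (g (t ++ [x])).length = t.length + 1 := by rw [hglen _ hx]; simp
    have h := list_eq_take_concat (g (t ++ [x])) t.length 0 hlen1
    rw [← hgtake _ hx t.length, List.take_left] at h
    exact h
  -- the family of permutations
  have hperm : ∀ s : List ℕ, ∃ π : Equiv.Perm ℕ,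
      (∀ t ∈ H.tree, f t = s → ∀ x : M, t ++ [x] ∈ H.tree →
        π ((f (t ++ [x])).getD t.length 0) = (g (t ++ [x])).getD t.length 0) ∧
      (s ∉ f '' H.tree → π = 1) := by
    intro s
    by_cases h : ∃ t ∈ H.tree, f t = s
    · obtain ⟨t, ht, rfl⟩ := h
      set a : M → ℕ := fun x => (f (t ++ [x])).getD t.length 0 with ha
      set b : M → ℕ := fun x => (g (t ++ [x])).getD t.length 0 with hb
      set C : Set ℕ := a '' {x : M | t ++ [x] ∈ H.tree} with hC
      have hCfin : C.Finite := (children_finite H.isGameTree hfin t).image a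
      set u : ℕ → ℕ := fun c =>
        if h : ∃ x : M, t ++ [x] ∈ H.tree ∧ a x = c then b (Classical.choose h) else c with hu
      have uval : ∀ x : M, t ++ [x] ∈ H.tree → u (a x) = b x := by
        intro x hx
        have hex : ∃ x' : M, t ++ [x'] ∈ H.tree ∧ a x' = a x := ⟨x, hx, rfl⟩
        rw [hu]
        simp only [dif_pos hex]
        obtain ⟨hx', hax'⟩ := Classical.choose_spec hex
        have hfe : f (t ++ [Classical.choose hex]) = f (t ++ [x]) := by
          rw [hfdec t ht _ hx', hfdec t ht _ hx]
          rw [show (f (t ++ [Classical.choose hex])).getD t.length 0 = a (Classical.choose hex)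
            from rfl, show (f (t ++ [x])).getD t.length 0 = a x from rfl, hax']
        have := hfinj _ hx' _ hx hfe
        have hxx : Classical.choose hex = x := by simpa using List.append_cancel_left this
        rw [hxx]
      have hinj : Set.InjOn u C := by
        rintro c₁ ⟨x₁, hx₁, rfl⟩ c₂ ⟨x₂, hx₂, rfl⟩ hcc
        rw [uval x₁ hx₁, uval x₂ hx₂] at hcc
        have hge : g (t ++ [x₁]) = g (t ++ [x₂]) := by
          rw [hgdec t ht _ hx₁, hgdec t ht _ hx₂]
          rw [show (g (t ++ [x₁])).getD t.length 0 = b x₁ from rfl,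
            show (g (t ++ [x₂])).getD t.length 0 = b x₂ from rfl, hcc]
        have := hginj _ hx₁ _ hx₂ hge
        have hxx : x₁ = x₂ := by simpa using List.append_cancel_left this
        rw [hxx]
      obtain ⟨π, hπ⟩ := exists_perm_extend hCfin hinj
      refine ⟨π, ?_, ?_⟩
      · intro t' ht' hft' x hx
        have : t' = t := hfinj _ ht' _ ht hft'
        subst this
        have : π (a x) = u (a x) := hπ (a x) ⟨x, hx, rfl⟩
        rw [show (f (t' ++ [x])).getD t'.length 0 = a x from rfl, this, uval x hx]
      · intro hnot
        exact absurd ⟨t, ht, rfl⟩ hnot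
    · refine ⟨1, ?_, fun _ => rfl⟩
      intro t ht hft
      exact absurd ⟨t, ht, hft⟩ h
  choose π hπ1 hπ2 using hperm
  -- commutation with f and g
  have hphi_ft : ∀ t, t ∈ H.tree → permMap π (f t) = g t := by
    intro t
    induction t using List.reverseRecOn with
    | nil =>
      intro ht
      have h1 : f [] = [] := List.eq_nil_of_length_eq_zero (by rw [hflen [] ht]; rfl)
      have h2 : g [] = [] := List.eq_nil_of_length_eq_zero (by rw [hglen [] ht]; rfl)
      rw [h1, h2]; rfl
    | append_singleton t x ih =>
      intro hx
      have ht : t ∈ H.tree := by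
        have := hcl _ hx t.length
        rwa [List.take_left] at this
      rw [hfdec t ht x hx, permMap_concat, ih ht, hπ1 (f t) t ht rfl x hx, ← hgdec t ht x hx]
  -- the run condition
  have hrun_iff : ∀ (R S : ℕ → ℕ), BarMapsTo (permMap π) R S → (R ∈ c00 ↔ S ∈ c00) := by
    intro R S hbar
    have hS : ∀ n, S n = π (runPrefix R n) (R n) := by
      intro n
      have h1 := hbar (n + 1)
      rw [runPrefix_succ, runPrefix_succ, permMap_concat, hbar n] at h1
      simpa using List.append_cancel_left h1
    by_cases hall : ∀ n, runPrefix R n ∈ f '' H.tree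
    · -- R is the image of a run of H under f
      choose tt htt hftt using fun n => hall n
      have httlen : ∀ n, (tt n).length = n := by
        intro n
        rw [← hflen _ (htt n), hftt, runPrefix_length]
      have httcoh : ∀ k n, k ≤ n → (tt n).take k = tt k := by
        intro k n hkn
        apply hfinj _ (hcl _ (htt n) k) _ (htt k)
        rw [hftake _ (htt n) k, hftt, hftt, runPrefix_take, Nat.min_eq_left hkn]
      have hne : tt 1 ≠ [] := by
        intro h
        have := httlen 1
        rw [h] at this
        simp at this
      set m0 : M := (tt 1).head hne with hm0
      set R' : ℕ → M := fun m => (tt (m + 1)).getD m m0 with hR'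
      have hR'pre : ∀ n, runPrefix R' n = tt n := by
        intro n
        apply List.ext_getElem
        · rw [runPrefix_length, httlen]
        · intro i h1 h2
          have hi : i < n := by rwa [runPrefix_length] at h1
          simp only [runPrefix, List.getElem_map, List.getElem_range, hR']
          rw [← httcoh (i + 1) n (by omega), take_getD _ _ (by omega),
            List.getD_eq_getElem _ m0 (by rw [httlen]; omega)]
      have hR'runs : R' ∈ Runs H.tree := fun n => by rw [hR'pre n]; exact htt n
      have hbarf : BarMapsTo f R' R := fun n => by rw [hR'pre n, hftt n]
      have hbarg : BarMapsTo g R' S := by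
        intro n
        rw [hR'pre n, ← hphi_ft (tt n) (htt n), hftt n, ← hbar n]
      have i1 := hfrun R' hR'runs R hbarf
      have i2 := hgrun R' hR'runs S hbarg
      exact i1.symm.trans i2
    · push_neg at hall
      obtain ⟨m, hm⟩ := hall
      have hnot : ∀ n, m ≤ n → runPrefix R n ∉ f '' H.tree := by
        rintro n hn ⟨t, ht, hft⟩
        apply hm
        refine ⟨t.take m, hcl t ht m, ?_⟩
        rw [hftake t ht m, hft, runPrefix_take, Nat.min_eq_left hn]
      have heq : ∀ n, m ≤ n → S n = R n := by
        intro n hn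
        rw [hS n, hπ2 (runPrefix R n) (hnot n hn)]
        rfl
      constructor
      · rintro ⟨N, hN⟩
        exact ⟨max N m, fun n hn => by
          rw [heq n (le_trans (le_max_right N m) hn)]
          exact hN n (le_trans (le_max_left N m) hn)⟩
      · rintro ⟨N, hN⟩
        exact ⟨max N m, fun n hn => by
          rw [← heq n (le_trans (le_max_right N m) hn)]
          exact hN n (le_trans (le_max_left N m) hn)⟩
  refine ⟨permMap π, ⟨⟨⟨fun _ _ => trivial, fun s _ => permMap_length π s,
    fun s _ k => permMap_take π s k⟩,
    fun t _ s _ h => permMap_injective π h,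
    fun R _ S hb => hrun_iff R S hb⟩, ?_⟩, hphi_ft⟩
  intro s _
  obtain ⟨t, ht⟩ := permMap_surjective π s
  exact ⟨t, trivial, ht⟩

end FraisseGames
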